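/- arXiv:1805.08942 — 2 statements merged into one kernel-verified Lean document; each statement's English description precedes it below -/
import Mathlib

section
/- For all integers i ≥ 1 and j ≥ 1, the coefficient m(i,j) is nonzero if and only if ⌊(i+2)/3⌋ ≤ j ≤ i. -/
/-- The matrix `m(i,j)` of Hirschhorn: `m(i,j) = 0` whenever `i = 0` or `j = 0`
(corresponding to nonpositive indices), `m(1,1) = 9`, `m(2,1) = 6`, `m(3,1) = 1`,
`m(i,1) = 0` for `i ≥ 4`, and for `j ≥ 2`,
`m(i,j) = 27·m(i-1,j-1) + 9·m(i-2,j-1) + m(i-3,j-1)`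
(truncated subtraction correctly yields the prescribed value `0` at nonpositive
first arguments). -/
def mCoef : ℕ → ℕ → ℤ
  | _, 0 => 0
  | 0, _ => 0
  | 1, 1 => 9
  | 2, 1 => 6
  | 3, 1 => 1
  | _ + 4, 1 => 0
  | i, j + 2 => 27 * mCoef (i - 1) (j + 1) + 9 * mCoef (i - 2) (j + 1) + mCoef (i - 3) (j + 1)

/-! The recurrence has positive weights and all coefficients are nonnegative, so `m(i,j+1) > 0`
exactly when one of `m(i-1,j)`, `m(i-2,j)`, `m(i-3,j)` is. Starting from the support `{1,2,3}` of
the first column, the support of column `j` is therefore `[j, 3j]`, and `i ≤ 3j ↔ ⌊(i+2)/3⌋ ≤ j`. -/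

@[simp] theorem mCoef_zero_right (i : ℕ) : mCoef i 0 = 0 := by
  cases i <;> rfl

@[simp] theorem mCoef_zero_left (j : ℕ) : mCoef 0 j = 0 := by
  cases j <;> rfl

theorem mCoef_add_two (i j : ℕ) :
    mCoef i (j + 2) =
      27 * mCoef (i - 1) (j + 1) + 9 * mCoef (i - 2) (j + 1) + mCoef (i - 3) (j + 1) := by
  cases i with
  | zero => simp
  | succ i => rw [mCoef]; omega

theorem mCoef_one_pos_iff (i : ℕ) : 0 < mCoef i 1 ↔ 1 ≤ i ∧ i ≤ 3 := by
  match i with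
  | 0 | 1 | 2 | 3 => decide
  | i + 4 => simp [mCoef]

theorem mCoef_nonneg (i j : ℕ) : 0 ≤ mCoef i j := by
  induction j generalizing i with
  | zero => simp
  | succ j ih =>
    cases j with
    | zero => match i with
      | 0 | 1 | 2 | 3 => decide
      | i + 4 => simp [mCoef]
    | succ j =>
      rw [mCoef_add_two]
      have := ih (i - 1); have := ih (i - 2); have := ih (i - 3)
      omega

theorem mCoef_pos_iff (i j : ℕ) : 0 < mCoef i j ↔ 1 ≤ j ∧ j ≤ i ∧ i ≤ 3 * j := by
  induction j generalizing i with
  | zero => simp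
  | succ j ih =>
    cases j with
    | zero => rw [mCoef_one_pos_iff]; omega
    | succ j =>
      have pos_comb_iff {a b c : ℤ} (ha : 0 ≤ a) (hb : 0 ≤ b) (hc : 0 ≤ c) :
          0 < 27 * a + 9 * b + c ↔ 0 < a ∨ 0 < b ∨ 0 < c := by
        omega
      rw [mCoef_add_two, pos_comb_iff (mCoef_nonneg _ _) (mCoef_nonneg _ _) (mCoef_nonneg _ _),
        ih, ih, ih]
      omega

theorem mCoef_ne_zero_iff_general (i j : ℕ) (hi : 1 ≤ i) :
    mCoef i j ≠ 0 ↔ (i + 2) / 3 ≤ j ∧ j ≤ i := by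
  rw [← (mCoef_nonneg i j).lt_iff_ne', mCoef_pos_iff]
  omega

/-- `m(i,j) ≠ 0` if and only if `⌊(i+2)/3⌋ ≤ j ≤ i`, for `i, j ≥ 1`. -/
theorem mCoef_ne_zero_iff (i j : ℕ) (hi : 1 ≤ i) (hj : 1 ≤ j) :
    mCoef i j ≠ 0 ↔ (i + 2) / 3 ≤ j ∧ j ≤ i :=
  mCoef_ne_zero_iff_general i j hi
end

section
/- For all integers j ≥ 1 and k ≥ 1: ν_3(c(2j−1,k)) ≥ 2j+δ_{k,1}+⌊(9k−10)/2⌋ and ν_3(c(2j,k)) ≥ 2j+2+δ_{k,1}+⌊(9k−10)/2⌋, where δ_{k,1} equals 1 if k = 1 and 0 otherwise. Equivalently, 3 raised to each of these exponents (which are nonnegative for all k ≥ 1) divides c(2j−1,k) and c(2j,k) respectively. -/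
/-- The matrix `c(j,k)`: `c(1,1) = 9`, `c(1,k) = 0` for `k ≥ 2`, and
`c(j+1,k) = ∑_{i≥1} c(j,i)·m(4i,i+k)` if `j` is odd, while
`c(j+1,k) = ∑_{i≥1} c(j,i)·m(4i+2,i+k)` if `j` is even.  All terms with `i > 3k + 3`
vanish (since `m(i',j') = 0` unless `⌊(i'+2)/3⌋ ≤ j'`), so the sums may be truncated
there. -/
def cCoef : ℕ → ℕ → ℤ
  | 1, 1 => 9
  | j + 2, k =>
      if (j + 1) % 2 = 1 then
        ∑ i ∈ Finset.Icc 1 (3 * k + 3), cCoef (j + 1) i * mCoef (4 * i) (i + k)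
      else
        ∑ i ∈ Finset.Icc 1 (3 * k + 3), cCoef (j + 1) i * mCoef (4 * i + 2) (i + k)
  | _, _ => 0

/-!
`m(i, j)` vanishes for `i < j`, and a `3`-adic induction along its recursion gives
`ν₃ m(i, j + 1) ≥ 3j + 2 - ⌊3(i - j - 1)/2⌋`. Writing `e(k) = δ_{k,1} + ⌊(9k - 10)/2⌋`
(`columnExponent`), this yields `ν₃ m(4i, i + k) ≥ 2 + e(k) - e(i)` and
`ν₃ m(4i + 2, i + k) ≥ e(k) - e(i)`. Hence if `ν₃ c(n, i) ≥ a + e(i)` for all `i`, then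
`ν₃ c(n + 1, k) ≥ a + 2 + e(k)` after an odd row `n` and `≥ a + e(k)` after an even one;
starting from `c(1, 1) = 9` this is the theorem.
-/

open Finset

-- Lower bounds `ν_p x ≥ a - b` are encoded as `p ^ a ∣ p ^ b * x`, avoiding truncated subtraction.
theorem pow_dvd_pow_mul_of_pow_dvd_pow_mul {α : Type*} [CommMonoidWithZero α] [IsCancelMulZero α]
    {p x : α} (hp : p ≠ 0) {a b c d : ℕ} (h : p ^ c ∣ p ^ d * x) (hle : a + d ≤ b + c) :
    p ^ a ∣ p ^ b * x := by
  refine (mul_dvd_mul_iff_left (pow_ne_zero d hp)).mp ?_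
  calc p ^ d * p ^ a = p ^ (a + d) := by rw [← pow_add, add_comm]
    _ ∣ p ^ (b + c) := pow_dvd_pow p hle
    _ = p ^ b * p ^ c := pow_add p b c
    _ ∣ p ^ b * (p ^ d * x) := mul_dvd_mul_left _ h
    _ = p ^ d * (p ^ b * x) := mul_left_comm _ _ _

theorem pow_add_dvd_sum_mul {α ι : Type*} [CommSemiring α] [IsCancelMulZero α] {p : α}
    (hp : p ≠ 0) {a b : ℕ} (e : ι → ℕ) {s : Finset ι} {c M : ι → α}
    (hc : ∀ i ∈ s, p ^ (a + e i) ∣ c i) (hM : ∀ i ∈ s, p ^ b ∣ p ^ e i * M i) :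
    p ^ (a + b) ∣ ∑ i ∈ s, c i * M i := by
  refine dvd_sum fun i hi => ?_
  have h : p ^ (a + e i + b) ∣ p ^ e i * (c i * M i) := by
    rw [pow_add, mul_left_comm]
    exact mul_dvd_mul (hc i hi) (hM i hi)
  simpa using pow_dvd_pow_mul_of_pow_dvd_pow_mul hp (b := 0) h (by omega)

theorem mCoef_succ_succ (i j : ℕ) :
    mCoef (i + 1) (j + 2) =
      27 * mCoef i (j + 1) + 9 * mCoef (i - 1) (j + 1) + mCoef (i - 2) (j + 1) := by
  simp [mCoef]

theorem mCoef_eq_zero_of_lt {i j : ℕ} (h : i < j) : mCoef i j = 0 := by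
  induction j generalizing i with
  | zero => omega
  | succ j ih =>
    rcases i with _ | i
    · cases j <;> simp [mCoef]
    rcases j with _ | j
    · omega
    rw [mCoef_succ_succ, ih (by omega), ih (by omega), ih (by omega)]
    ring

theorem pow_dvd_pow_mul_mCoef (i j : ℕ) :
    (3 : ℤ) ^ (3 * j + 2) ∣ 3 ^ (3 * (i - (j + 1)) / 2) * mCoef i (j + 1) := by
  induction j generalizing i with
  | zero =>
    match i with
    | 0 | 1 | 2 | 3 => norm_num [mCoef]
    | _ + 4 => simp [mCoef]
  | succ j ih =>
    rcases i with _ | i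
    · simp [mCoef]
    -- Passing from `i` to `i - r` lowers `⌊3(i - j - 1)/2⌋` by at least `⌊3r/2⌋`, so the factor
    -- `3 ^ s` of the recursion supplies the three extra powers of `3` required.
    have term (r s : ℕ) (hrs : 3 ≤ s + 3 * r / 2) : (3 : ℤ) ^ (3 * j + 5) ∣
        3 ^ (3 * (i - (j + 1)) / 2 + s) * mCoef (i - r) (j + 1) := by
      rcases lt_or_ge (i - r) (j + 1) with hlt | hge
      · simp [mCoef_eq_zero_of_lt hlt]
      · exact pow_dvd_pow_mul_of_pow_dvd_pow_mul three_ne_zero (ih (i - r)) (by omega)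
    rw [mCoef_succ_succ, show i + 1 - (j + 1 + 1) = i - (j + 1) by omega]
    have expand (E : ℕ) : (3 : ℤ) ^ E *
        (27 * mCoef i (j + 1) + 9 * mCoef (i - 1) (j + 1) + mCoef (i - 2) (j + 1)) =
        3 ^ (E + 3) * mCoef (i - 0) (j + 1) + 3 ^ (E + 2) * mCoef (i - 1) (j + 1) +
          3 ^ (E + 0) * mCoef (i - 2) (j + 1) := by
      simp only [pow_add, Nat.sub_zero]; ring
    rw [expand, show 3 * (j + 1) + 2 = 3 * j + 5 by ring]
    exact dvd_add (dvd_add (term 0 3 le_rfl) (term 1 2 le_rfl)) (term 2 0 le_rfl)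

def columnExponent (k : ℕ) : ℕ := if k = 1 then 0 else (9 * k - 10) / 2

theorem pow_two_add_dvd_pow_mul_mCoef_four_mul {i k : ℕ} (hk : 1 ≤ k) :
    (3 : ℤ) ^ (2 + columnExponent k) ∣ 3 ^ columnExponent i * mCoef (4 * i) (i + k) := by
  rcases lt_or_ge (4 * i) (i + k) with hlt | hge
  · simp [mCoef_eq_zero_of_lt hlt]
  · have hm := pow_dvd_pow_mul_mCoef (4 * i) (i + k - 1)
    rw [Nat.sub_add_cancel (by omega)] at hm
    exact pow_dvd_pow_mul_of_pow_dvd_pow_mul three_ne_zero hm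
      (by unfold columnExponent; split_ifs <;> omega)

theorem pow_dvd_pow_mul_mCoef_four_mul_add_two {i k : ℕ} :
    (3 : ℤ) ^ columnExponent k ∣ 3 ^ columnExponent i * mCoef (4 * i + 2) (i + k) := by
  rcases le_or_gt k 1 with hk | hk
  · have h0 : columnExponent k = 0 := by unfold columnExponent; split_ifs <;> omega
    simp [h0]
  rcases lt_or_ge (4 * i + 2) (i + k) with hlt | hge
  · simp [mCoef_eq_zero_of_lt hlt]
  · have hm := pow_dvd_pow_mul_mCoef (4 * i + 2) (i + k - 1)
    rw [Nat.sub_add_cancel (by omega)] at hm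
    exact pow_dvd_pow_mul_of_pow_dvd_pow_mul three_ne_zero hm
      (by unfold columnExponent; split_ifs <;> omega)

theorem cCoef_succ_of_odd {n : ℕ} (hn : n % 2 = 1) (k : ℕ) :
    cCoef (n + 1) k = ∑ i ∈ Icc 1 (3 * k + 3), cCoef n i * mCoef (4 * i) (i + k) := by
  obtain ⟨m, rfl⟩ : ∃ m, n = m + 1 := ⟨n - 1, by omega⟩
  rw [cCoef, if_pos hn]

theorem cCoef_succ_of_even {n : ℕ} (hn : n % 2 = 0) (hn1 : 1 ≤ n) (k : ℕ) :
    cCoef (n + 1) k = ∑ i ∈ Icc 1 (3 * k + 3), cCoef n i * mCoef (4 * i + 2) (i + k) := by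
  obtain ⟨m, rfl⟩ : ∃ m, n = m + 1 := ⟨n - 1, by omega⟩
  rw [cCoef, if_neg (by omega)]

theorem pow_dvd_cCoef_one {k : ℕ} (hk : 1 ≤ k) :
    (3 : ℤ) ^ (2 + columnExponent k) ∣ cCoef 1 k := by
  obtain _ | _ | k := k
  · omega
  · norm_num [cCoef, columnExponent]
  · simp [cCoef]

-- `2 * (n / 2) + 2` is `2j` for `n = 2j - 1` and `2j + 2` for `n = 2j`.
theorem pow_dvd_cCoef {n k : ℕ} (hn : 1 ≤ n) (hk : 1 ≤ k) :
    (3 : ℤ) ^ (2 * (n / 2) + 2 + columnExponent k) ∣ cCoef n k := by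
  induction n, hn using Nat.le_induction generalizing k with
  | base => exact pow_dvd_cCoef_one hk
  | succ n hn ih =>
    have ih' : ∀ i ∈ Icc 1 (3 * k + 3),
        (3 : ℤ) ^ (2 * (n / 2) + 2 + columnExponent i) ∣ cCoef n i :=
      fun i hi => ih (mem_Icc.mp hi).1
    rcases Nat.mod_two_eq_zero_or_one n with heven | hodd
    · rw [cCoef_succ_of_even heven hn, show (n + 1) / 2 = n / 2 by omega]
      exact pow_add_dvd_sum_mul three_ne_zero columnExponent ih'
        fun _ _ => pow_dvd_pow_mul_mCoef_four_mul_add_two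
    · rw [cCoef_succ_of_odd hodd, show 2 * ((n + 1) / 2) + 2 + columnExponent k =
        2 * (n / 2) + 2 + (2 + columnExponent k) by omega]
      exact pow_add_dvd_sum_mul three_ne_zero columnExponent ih'
        fun _ _ => pow_two_add_dvd_pow_mul_mCoef_four_mul hk

/-- The exponent `δ_{k,1} + ⌊(9k-10)/2⌋` is written as `if k = 1 then 0 else (9k-10)/2`: for `k = 1`
it is `1 + ⌊-1/2⌋ = 0`, and for `k ≥ 2` the floor is natural-number division. -/
theorem cCoef_three_adic_bound (j k : ℕ) (hj : 1 ≤ j) (hk : 1 ≤ k) :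
    (3 : ℤ) ^ (2 * j + (if k = 1 then 0 else (9 * k - 10) / 2)) ∣ cCoef (2 * j - 1) k ∧
    (3 : ℤ) ^ (2 * j + 2 + (if k = 1 then 0 else (9 * k - 10) / 2)) ∣ cCoef (2 * j) k := by
  have hodd := pow_dvd_cCoef (n := 2 * j - 1) (by omega) hk
  have heven := pow_dvd_cCoef (n := 2 * j) (by omega) hk
  rw [show 2 * ((2 * j - 1) / 2) + 2 = 2 * j by omega] at hodd
  rw [show 2 * (2 * j / 2) = 2 * j by omega] at heven
  exact ⟨hodd, heven⟩
end
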